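/- Let Q̄ be an imprecise probability tree. Then E_meas(f | s) = E_V(f | s) for every finitary gamble f and every situation s ∈ 𝒳*, where E_meas is the global measure-theoretic upper expectation and E_V is the game-theoretic upper expectation associated with Q̄. -/

import Mathlib

open Filter MeasureTheory
open scoped Classical ENNReal NNReal

namespace UEP

variable {X : Type*}

/-- The string of the first `n` states of a path `ω`. -/
def pref (ω : ℕ → X) (n : ℕ) : List X := List.ofFn (fun i : Fin n => ω i)

/-- The cylinder event of a situation `s`. -/
def cyl (s : List X) : Set (ℕ → X) := {ω : ℕ → X | pref ω s.length = s}

/-- `f` depends only on the first `n` states. -/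
def NMeas (n : ℕ) (f : (ℕ → X) → EReal) : Prop :=
  ∀ ω₁ ω₂ : ℕ → X, pref ω₁ n = pref ω₂ n → f ω₁ = f ω₂

/-- `f` is bounded below (by a real constant). -/
def IsBddBelow (f : (ℕ → X) → EReal) : Prop := ∃ c : ℝ, ∀ ω, (c : EReal) ≤ f ω

/-- `f` is bounded above (by a real constant). -/
def IsBddAbove (f : (ℕ → X) → EReal) : Prop := ∃ c : ℝ, ∀ ω, f ω ≤ (c : EReal)

/-- `f` is real-valued and bounded. -/
def IsGambleVal (f : (ℕ → X) → EReal) : Prop :=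
  ∃ a b : ℝ, ∀ ω, (a : EReal) ≤ f ω ∧ f ω ≤ (b : EReal)

/-- `f` is an `n`-measurable gamble. -/
def IsNGamble (n : ℕ) (f : (ℕ → X) → EReal) : Prop := NMeas n f ∧ IsGambleVal f

/-- `f` is a finitary gamble. -/
def IsFinitaryGamble (f : (ℕ → X) → EReal) : Prop := (∃ n, NMeas n f) ∧ IsGambleVal f

/-- `f` is finitary. -/
def IsFinitary (f : (ℕ → X) → EReal) : Prop := ∃ n, NMeas n f

/-- pointwise convergence of a sequence of global variables. -/
def PtwLim (fs : ℕ → (ℕ → X) → EReal) (f : (ℕ → X) → EReal) : Prop :=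
  ∀ ω, Tendsto (fun n => fs n ω) atTop (nhds (f ω))

/-- the sequence is uniformly bounded below. -/
def UnifBddBelow (fs : ℕ → (ℕ → X) → EReal) : Prop :=
  ∃ c : ℝ, ∀ n ω, (c : EReal) ≤ fs n ω

/-- `f` belongs to `V̄_{b,lim}`: bounded below and a pointwise limit of finitary gambles. -/
def Vblim (f : (ℕ → X) → EReal) : Prop :=
  IsBddBelow f ∧ ∃ fs : ℕ → (ℕ → X) → EReal,
    (∀ n, IsFinitaryGamble (fs n)) ∧ PtwLim fs f

/-- A coherent upper expectation on the finite state space `X`. -/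
def IsCoherent [Fintype X] (Q : (X → ℝ) → ℝ) : Prop :=
  (∀ f : X → ℝ, Q f ≤ ⨆ x, f x) ∧
  (∀ f g : X → ℝ, Q (fun x => f x + g x) ≤ Q f + Q g) ∧
  (∀ l : ℝ, 0 ≤ l → ∀ f : X → ℝ, Q (fun x => l * f x) = l * Q f)

/-- Axiom P1: compatibility with the local models. -/
def P1 (Q : List X → (X → ℝ) → ℝ) (E : ((ℕ → X) → EReal) → List X → EReal) : Prop :=
  ∀ (s : List X) (f : X → ℝ),
    E (fun ω => (f (ω s.length) : EReal)) s = ((Q s f : ℝ) : EReal)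

/-- Axiom P2. -/
def P2 (E : ((ℕ → X) → EReal) → List X → EReal) : Prop :=
  ∀ f : (ℕ → X) → EReal, IsFinitaryGamble f → ∀ s : List X,
    E f s = E (fun ω => if ω ∈ cyl s then f ω else 0) s

/-- Axiom P3 (inequality form). -/
def P3le (E : ((ℕ → X) → EReal) → List X → EReal) : Prop :=
  ∀ f : (ℕ → X) → EReal, IsFinitaryGamble f → ∀ (n : ℕ) (ω : ℕ → X),
    E f (pref ω n) ≤ E (fun ω' => E f (pref ω' (n + 1))) (pref ω n)

/-- Axiom P3 with equality: the law of iterated upper expectations. -/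
def P3eq (E : ((ℕ → X) → EReal) → List X → EReal) : Prop :=
  ∀ f : (ℕ → X) → EReal, IsFinitaryGamble f → ∀ (n : ℕ) (ω : ℕ → X),
    E f (pref ω n) = E (fun ω' => E f (pref ω' (n + 1))) (pref ω n)

/-- Axiom P4: monotonicity. -/
def P4 (E : ((ℕ → X) → EReal) → List X → EReal) : Prop :=
  ∀ f g : (ℕ → X) → EReal, (∀ ω, f ω ≤ g ω) → ∀ s : List X, E f s ≤ E g s

/-- Axiom P5. -/
def P5 (E : ((ℕ → X) → EReal) → List X → EReal) : Prop :=
  ∀ (s : List X) (f : (ℕ → X) → EReal) (fs : ℕ → (ℕ → X) → EReal),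
    (∀ n, IsFinitaryGamble (fs n)) → UnifBddBelow fs → PtwLim fs f →
    E f s ≤ limsup (fun n => E (fs n) s) atTop

/-- Axiom P6. -/
def P6 (E : ((ℕ → X) → EReal) → List X → EReal) : Prop :=
  ∀ f : (ℕ → X) → EReal, Vblim f → ∀ s : List X,
    ∃ fs : ℕ → (ℕ → X) → EReal,
      (∀ n, IsNGamble n (fs n)) ∧ UnifBddBelow fs ∧ PtwLim fs f ∧
      limsup (fun n => E (fs n) s) atTop ≤ E f s

/-- Axiom P7. -/
def P7 (E : ((ℕ → X) → EReal) → List X → EReal) : Prop :=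
  ∀ (f : (ℕ → X) → EReal) (s : List X),
    E f s = sInf {y : EReal | ∃ g : (ℕ → X) → EReal,
      Vblim g ∧ (∀ ω, f ω ≤ g ω) ∧ y = E g s}

/-- bundled axioms P1–P5. -/
def P15 (Q : List X → (X → ℝ) → ℝ) (E : ((ℕ → X) → EReal) → List X → EReal) : Prop :=
  P1 Q E ∧ P2 E ∧ P3le E ∧ P4 E ∧ P5 E

/-- `Qe` extends `Q` from gambles to extended-real variables. -/
def ExtendsLocal [Fintype X] (Q : (X → ℝ) → ℝ) (Qe : (X → EReal) → EReal) : Prop :=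
  ∀ f : X → ℝ, Qe (fun x => (f x : EReal)) = ((Q f : ℝ) : EReal)

/-- continuity with respect to upper cuts. -/
def UpperCutCont (Qe : (X → EReal) → EReal) : Prop :=
  ∀ f : X → EReal, (∃ c : ℝ, ∀ x, (c : EReal) ≤ f x) →
    Tendsto (fun c : ℝ => Qe (fun x => min (f x) (c : EReal))) atTop (nhds (Qe f))

/-- continuity with respect to lower cuts. -/
def LowerCutCont (Qe : (X → EReal) → EReal) : Prop :=
  ∀ f : X → EReal,
    Tendsto (fun c : ℝ => Qe (fun x => max (f x) (c : EReal))) atBot (nhds (Qe f))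

/-- `Qe` is the extension of the imprecise probability tree `Q` satisfying
continuity with respect to upper and lower cuts. -/
def LocalExtension [Fintype X] (Q : List X → (X → ℝ) → ℝ)
    (Qe : List X → (X → EReal) → EReal) : Prop :=
  ∀ s : List X, ExtendsLocal (Q s) (Qe s) ∧ UpperCutCont (Qe s) ∧ LowerCutCont (Qe s)

/-- supermartingale with respect to the extended local models `Qe`. -/
def IsSupermart (Qe : List X → (X → EReal) → EReal) (M : List X → EReal) : Prop :=
  ∀ s : List X, Qe s (fun x => M (s ++ [x])) ≤ M s

/-- a bounded-below process. -/
def MBddBelow (M : List X → EReal) : Prop := ∃ c : ℝ, ∀ s : List X, (c : EReal) ≤ M s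

/-- the game-theoretic upper expectation (Shafer–Vovk). -/
noncomputable def EV (Qe : List X → (X → EReal) → EReal)
    (f : (ℕ → X) → EReal) (s : List X) : EReal :=
  sInf {y : EReal | ∃ M : List X → EReal, MBddBelow M ∧ IsSupermart Qe M ∧
    (∀ ω ∈ cyl s, f ω ≤ liminf (fun n => M (pref ω n)) atTop) ∧ y = M s}

/-- a canonical path passing through the situation `s`. -/
noncomputable def extPath [Nonempty X] (s : List X) : ℕ → X :=
  fun i => if h : i < s.length then s.get ⟨i, h⟩ else Classical.arbitrary X

/-- extended-real addition with the convention `(+∞) + (−∞) = (−∞) + (+∞) = +∞`. -/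
noncomputable def eadd (a b : EReal) : EReal := if a = ⊤ ∨ b = ⊤ then ⊤ else a + b

/-- extended-real finite sums with the conventions `0·(±∞) = 0` and
`(+∞) + (−∞) = +∞`. -/
noncomputable def esum {α : Type*} (s : Finset α) (f : α → EReal) : EReal :=
  if ∃ x ∈ s, f x = ⊤ then ⊤ else ∑ x ∈ s, f x

/-- the σ-algebra `ℱ` on paths generated by all cylinder events. -/
def cylSA (X : Type*) : MeasurableSpace (ℕ → X) :=
  MeasurableSpace.generateFrom {A : Set (ℕ → X) | ∃ s : List X, A = cyl s}

/-- a precise probability tree: a probability mass function in every situation. -/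
def IsTree [Fintype X] (p : List X → X → ℝ) : Prop :=
  ∀ s : List X, (∀ x, 0 ≤ p s x) ∧ ∑ x, p s x = 1

/-- the `i`-th entry (0-based) of a list, i.e. the `(i+1)`-th state. -/
noncomputable def nthL [Nonempty X] (z : List X) (i : ℕ) : X :=
  z.getD i (Classical.arbitrary X)

/-- `P` is the family of conditional probability measures on `ℱ` determined by
the precise probability tree `p` via the product formula on cylinder events. -/
def CylProp [Fintype X] [Nonempty X] (p : List X → X → ℝ)
    (P : List X → @Measure (ℕ → X) (cylSA X)) : Prop :=
  ∀ s z : List X,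
    P s (cyl z) =
      if s.length < z.length ∧ z.take s.length = s then
        ∏ i ∈ Finset.Ico s.length z.length, ENNReal.ofReal (p (z.take i) (nthL z i))
      else if z.length ≤ s.length ∧ s.take z.length = z then 1 else 0

/-- the nonnegative part of an extended real, as an `ℝ≥0∞`. -/
noncomputable def toENN (a : EReal) : ℝ≥0∞ := if a = ⊤ then ⊤ else ENNReal.ofReal a.toReal

/-- `∫ f⁺ dP`. -/
noncomputable def lpos (P : @Measure (ℕ → X) (cylSA X)) (f : (ℕ → X) → EReal) : ℝ≥0∞ :=
  @MeasureTheory.lintegral _ (cylSA X) P (fun ω => toENN (f ω))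

/-- `∫ f⁻ dP`. -/
noncomputable def lneg (P : @Measure (ℕ → X) (cylSA X)) (f : (ℕ → X) → EReal) : ℝ≥0∞ :=
  @MeasureTheory.lintegral _ (cylSA X) P (fun ω => toENN (-(f ω)))

/-- the Lebesgue integral `∫ f dP = ∫ f⁺ dP − ∫ f⁻ dP`. -/
noncomputable def emeas (P : @Measure (ℕ → X) (cylSA X)) (f : (ℕ → X) → EReal) : EReal :=
  (lpos P f : EReal) - (lneg P f : EReal)

/-- `ℱ`-measurability of a global variable. -/
def FMeasurable (f : (ℕ → X) → EReal) : Prop := @Measurable _ _ (cylSA X) _ f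

/-- the Lebesgue integral `∫ f dP` exists. -/
def EMeasExists (P : @Measure (ℕ → X) (cylSA X)) (f : (ℕ → X) → EReal) : Prop :=
  FMeasurable f ∧ min (lpos P f) (lneg P f) < ⊤

/-- the upper integral `Ē¹`. -/
noncomputable def upInt1 (P : @Measure (ℕ → X) (cylSA X)) (f : (ℕ → X) → EReal) : EReal :=
  sInf {y : EReal | ∃ g : (ℕ → X) → EReal,
    FMeasurable g ∧ IsBddBelow g ∧ (∀ ω, f ω ≤ g ω) ∧ y = emeas P g}

/-- the upper integral `Ē²`. -/
noncomputable def upInt2 (P : @Measure (ℕ → X) (cylSA X)) (f : (ℕ → X) → EReal) : EReal :=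
  sInf {y : EReal | ∃ g : (ℕ → X) → EReal,
    EMeasExists P g ∧ (∀ ω, f ω ≤ g ω) ∧ y = emeas P g}

/-- the game-theoretic upper expectation with respect to a precise probability tree. -/
noncomputable def EVp [Fintype X] (p : List X → X → ℝ)
    (f : (ℕ → X) → EReal) (s : List X) : EReal :=
  sInf {y : EReal | ∃ M : List X → EReal, MBddBelow M ∧
    (∀ t : List X, ∑ x, ((p t x : ℝ) : EReal) * M (t ++ [x]) ≤ M t) ∧
    (∀ ω ∈ cyl s, f ω ≤ liminf (fun n => M (pref ω n)) atTop) ∧ y = M s}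

/-- the credal set of a coherent upper expectation. -/
def credal [Fintype X] (Q : (X → ℝ) → ℝ) : Set (X → ℝ) :=
  {q | (∀ x, 0 ≤ q x) ∧ (∑ x, q x = 1) ∧ ∀ f : X → ℝ, ∑ x, f x * q x ≤ Q f}

/-- a precise probability tree compatible with the imprecise probability tree `Q`. -/
def Compat [Fintype X] (Q : List X → (X → ℝ) → ℝ) (p : List X → X → ℝ) : Prop :=
  ∀ s : List X, p s ∈ credal (Q s)

/-- the global measure-theoretic upper expectation. -/
noncomputable def Emeas [Fintype X] (Q : List X → (X → ℝ) → ℝ)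
    (P : (List X → X → ℝ) → List X → @Measure (ℕ → X) (cylSA X))
    (f : (ℕ → X) → EReal) (s : List X) : EReal :=
  sSup {y : EReal | ∃ p : List X → X → ℝ, Compat Q p ∧ y = upInt1 (P p s) f}



set_option linter.unusedSectionVars false

section Chunk1
variable [Fintype X] [Nonempty X] {Q : (X → ℝ) → ℝ}

lemma coh_zero (hQ : IsCoherent Q) : Q (fun _ => 0) = 0 := by
  have h := hQ.2.2 0 le_rfl (fun _ => 0)
  simpa using h

lemma coh_le_max (hQ : IsCoherent Q) {g : X → ℝ} {m : ℝ} (hm : ∀ x, g x ≤ m) : Q g ≤ m :=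
  le_trans (hQ.1 g) (ciSup_le hm)

lemma coh_ge_min (hQ : IsCoherent Q) {g : X → ℝ} {m : ℝ} (hm : ∀ x, m ≤ g x) : m ≤ Q g := by
  have h0 : Q (fun x => g x + (-g x)) = 0 := by simpa using coh_zero hQ
  have h1 := hQ.2.1 g (fun x => -g x)
  have h2 : Q (fun x => -g x) ≤ -m := coh_le_max hQ (fun x => by linarith [hm x])
  linarith

lemma coh_mono (hQ : IsCoherent Q) {g₁ g₂ : X → ℝ} (h : ∀ x, g₁ x ≤ g₂ x) : Q g₁ ≤ Q g₂ := by
  have h1 : Q (fun x => g₂ x + (g₁ x - g₂ x)) ≤ Q g₂ + Q (fun x => g₁ x - g₂ x) := hQ.2.1 _ _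
  have h2 : Q (fun x => g₁ x - g₂ x) ≤ 0 := coh_le_max hQ (fun x => by linarith [h x])
  have h3 : (fun x => g₂ x + (g₁ x - g₂ x)) = g₁ := by funext x; ring
  rw [h3] at h1; linarith

lemma credal_attains (hQ : IsCoherent Q) (h : X → ℝ) (hne : h ≠ 0) :
    ∃ q ∈ credal Q, ∑ x, h x * q x = Q h := by
  set F : (X → ℝ) →ₗ.[ℝ] ℝ := LinearPMap.mkSpanSingleton h (Q h) hne with hF
  have hsub : ∀ x : F.domain, F x ≤ Q x := by
    rintro ⟨v, hv⟩
    have h2 : v ∈ Submodule.span ℝ {h} := hv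
    obtain ⟨c, rfl⟩ := Submodule.mem_span_singleton.1 h2
    have happ : F ⟨c • h, hv⟩ = c • Q h :=
      LinearPMap.mkSpanSingleton'_apply h (Q h) _ c hv
    rw [happ]
    show c • Q h ≤ Q (c • h)
    rcases le_or_gt 0 c with hc | hc
    · have hh := hQ.2.2 c hc h
      have hch : (fun x => c * h x) = c • h := by funext x; simp [smul_eq_mul]
      rw [hch] at hh
      simp only [smul_eq_mul]
      rw [← hh]
    · have hd : 0 < -c := by linarith
      have hhom := hQ.2.2 (-c) hd.le h
      have hadd := hQ.2.1 (fun x => (-c) * h x) (fun x => c * h x)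
      have hz : Q (fun x => (-c) * h x + c * h x) = 0 := by
        have he : (fun x => (-c) * h x + c * h x) = (fun _ => (0:ℝ)) := by funext x; ring
        rw [he, coh_zero hQ]
      have hch : (fun x : X => c * h x) = c • h := by funext x; simp [smul_eq_mul]
      rw [← hch]
      simp only [smul_eq_mul]
      nlinarith [hz ▸ hadd, hhom]
  obtain ⟨g, hg1, hg2⟩ := exists_extension_of_le_sublinear F Q
    (fun c hc x => by
      have := hQ.2.2 c hc.le x
      have hcx : (fun y => c * x y) = c • x := by funext y; simp [smul_eq_mul]
      rw [hcx] at this; exact this)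
    (fun x y => by
      have := hQ.2.1 x y
      have hxy : (fun a => x a + y a) = x + y := rfl
      rw [hxy] at this; exact this)
    hsub
  -- q from g
  set q : X → ℝ := fun x => g (Pi.single x (1:ℝ)) with hq
  have hrepr : ∀ v : X → ℝ, g v = ∑ x, v x * q x := by
    intro v
    have hv : v = ∑ x, v x • (Pi.single x (1:ℝ) : X → ℝ) := by
      funext y
      simp [Pi.single_apply, Finset.sum_apply, mul_ite]
    conv_lhs => rw [hv]
    rw [map_sum]
    congr 1; funext x
    rw [_root_.map_smul]; simp [hq, smul_eq_mul]
  have hqnn : ∀ x, 0 ≤ q x := by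
    intro x
    have h1 : g (-(Pi.single x (1:ℝ))) ≤ Q (-(Pi.single x (1:ℝ))) := hg2 _
    have h2 : Q (-(Pi.single x (1:ℝ))) ≤ 0 := coh_le_max hQ (fun y => by
      by_cases hxy : y = x <;> simp [Pi.single_apply, hxy])
    rw [map_neg] at h1
    have h3 : g (Pi.single x (1:ℝ)) = q x := rfl
    linarith
  have hone : g (fun _ => (1:ℝ)) = 1 := by
    have h1 : g (fun _ => (1:ℝ)) ≤ 1 := le_trans (hg2 _) (coh_le_max hQ (fun _ => le_rfl))
    have h2 : g (-(fun _ => (1:ℝ))) ≤ -1 := le_trans (hg2 _)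
      (coh_le_max hQ (fun _ => by norm_num))
    rw [map_neg] at h2
    linarith
  have hsum : ∑ x, q x = 1 := by
    have := hrepr (fun _ => (1:ℝ))
    simp only [one_mul] at this
    rw [← this, hone]
  have hdom : ∀ v : X → ℝ, ∑ x, v x * q x ≤ Q v := fun v => (hrepr v) ▸ hg2 v
  refine ⟨q, ⟨hqnn, hsum, hdom⟩, ?_⟩
  have hgh : g h = Q h := by
    have := hg1 ⟨h, Submodule.mem_span_singleton_self h⟩
    rw [this]
    exact LinearPMap.mkSpanSingleton_apply _ _ hne _
  rw [← hrepr h, hgh]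

lemma credal_nonempty (hQ : IsCoherent Q) : ∃ q, q ∈ credal Q := by
  have hne : (fun _ : X => (1:ℝ)) ≠ 0 := by
    intro hc
    have := congrFun hc (Classical.arbitrary X)
    norm_num at this
  obtain ⟨q, hq, -⟩ := credal_attains hQ _ hne
  exact ⟨q, hq⟩

lemma credal_attains' (hQ : IsCoherent Q) (h : X → ℝ) :
    ∃ q ∈ credal Q, ∑ x, h x * q x = Q h := by
  by_cases hne : h = 0
  · obtain ⟨q, hq⟩ := credal_nonempty hQ
    refine ⟨q, hq, ?_⟩
    subst hne
    have h0 : Q (0 : X → ℝ) = Q (fun _ => (0:ℝ)) := rfl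
    simp [h0, coh_zero hQ]
  · exact credal_attains hQ h hne

end Chunk1

section Chunk2
@[simp] lemma pref_length (ω : ℕ → X) (n : ℕ) : (pref ω n).length = n := by
  simp [pref]

lemma pref_eq_iff {ω₁ ω₂ : ℕ → X} {n : ℕ} :
    pref ω₁ n = pref ω₂ n ↔ ∀ i < n, ω₁ i = ω₂ i := by
  rw [pref, pref, List.ofFn_inj]
  constructor
  · intro h i hi
    exact congrFun h ⟨i, hi⟩
  · intro h; funext i; exact h i i.2

lemma pref_mono {ω₁ ω₂ : ℕ → X} {m n : ℕ} (h : pref ω₁ m = pref ω₂ m) (hnm : n ≤ m) :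
    pref ω₁ n = pref ω₂ n := by
  rw [pref_eq_iff] at h ⊢
  exact fun i hi => h i (lt_of_lt_of_le hi hnm)

variable [Nonempty X]

lemma nthL_pref {ω : ℕ → X} {n i : ℕ} (h : i < n) : nthL (pref ω n) i = ω i := by
  rw [nthL, List.getD_eq_getElem _ _ (by simpa using h)]
  simp [pref]

lemma mem_cyl_iff {ω : ℕ → X} {t : List X} :
    ω ∈ cyl t ↔ ∀ i < t.length, ω i = nthL t i := by
  constructor
  · intro hω i h
    have h1 : pref ω t.length = t := hω
    rw [← h1, nthL_pref h]
  · intro h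
    show pref ω t.length = t
    have h2 : pref (fun i => nthL t i) t.length = t := by
      apply List.ext_getElem (by simp)
      intro i h1 h2
      simp only [pref]
      rw [List.getElem_ofFn]
      rw [nthL, List.getD_eq_getElem _ _ h2]
    conv_rhs => rw [← h2]
    rw [pref_eq_iff]
    exact h

lemma extPath_lt {t : List X} {i : ℕ} (h : i < t.length) :
    extPath t i = nthL t i := by
  rw [extPath, dif_pos h, nthL, List.getD_eq_getElem _ _ h, List.get_eq_getElem]

lemma extPath_mem_cyl (t : List X) : extPath t ∈ cyl t :=
  mem_cyl_iff.2 (fun i h => extPath_lt h)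

lemma cyl_mono {s t : List X} (h : s <+: t) : cyl t ⊆ cyl s := by
  intro ω hω
  rw [mem_cyl_iff] at hω ⊢
  intro i hi
  have hlen : s.length ≤ t.length := h.length_le
  rw [hω i (lt_of_lt_of_le hi hlen)]
  rw [nthL, nthL, List.getD_eq_getElem _ _ hi, List.getD_eq_getElem _ _ (lt_of_lt_of_le hi hlen)]
  exact (List.IsPrefix.getElem h hi).symm

lemma pref_extPath (t : List X) : pref (extPath t) t.length = t :=
  extPath_mem_cyl t

/-- agreement of `extPath t` with `ω ∈ cyl t` up to the length of `t`. -/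
lemma pref_extPath_eq {ω : ℕ → X} {t : List X} (hω : ω ∈ cyl t) {n : ℕ} (h : n ≤ t.length) :
    pref (extPath t) n = pref ω n := by
  apply pref_mono (m := t.length) _ h
  rw [pref_extPath]; exact hω.symm

lemma nmeas_mono {f : (ℕ → X) → EReal} {n m : ℕ} (h : NMeas n f) (hnm : n ≤ m) : NMeas m f :=
  fun ω₁ ω₂ hp => h ω₁ ω₂ (pref_mono hp hnm)

/-- value of an NMeas function on a cylinder of length ≥ n -/
lemma nmeas_cyl_val {f : (ℕ → X) → EReal} {n : ℕ} (hf : NMeas n f) {t : List X}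
    (hn : n ≤ t.length) {ω : ℕ → X} (hω : ω ∈ cyl t) : f ω = f (extPath t) :=
  (hf _ _ (pref_extPath_eq hω hn)).symm

end Chunk2

section EReal_helpers
lemma ereal_ne_top {x : EReal} {b : ℝ} (hb : x ≤ (b:EReal)) : x ≠ ⊤ :=
  (lt_of_le_of_lt hb (EReal.coe_lt_top b)).ne
lemma ereal_ne_bot {x : EReal} {a : ℝ} (ha : (a:EReal) ≤ x) : x ≠ ⊥ :=
  (lt_of_lt_of_le (EReal.bot_lt_coe a) ha).ne'
lemma ereal_toReal_ge {x : EReal} {a : ℝ} (ha : (a:EReal) ≤ x) (hx : x ≠ ⊤) : a ≤ x.toReal := by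
  have := EReal.toReal_le_toReal ha (EReal.coe_ne_bot a) hx
  simpa using this
lemma ereal_toReal_le {x : EReal} {b : ℝ} (hb : x ≤ (b:EReal)) (hx : x ≠ ⊥) : x.toReal ≤ b := by
  have := EReal.toReal_le_toReal hb hx (EReal.coe_ne_top b)
  simpa using this
end EReal_helpers

section Qe
variable [Fintype X] [Nonempty X] {Q : (X → ℝ) → ℝ} {Qe : (X → EReal) → EReal}

lemma Qe_coe_eq (hE : ExtendsLocal Q Qe) {g : X → EReal} {a b : ℝ}
    (ha : ∀ x, (a:EReal) ≤ g x) (hb : ∀ x, g x ≤ (b:EReal)) :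
    Qe g = ((Q (fun x => (g x).toReal) : ℝ) : EReal) := by
  have hg : g = fun x => (((g x).toReal : ℝ) : EReal) := by
    funext x
    exact (EReal.coe_toReal (ereal_ne_top (hb x)) (ereal_ne_bot (ha x))).symm
  conv_lhs => rw [hg]
  exact hE _

lemma Qe_mono_bdd (hQ : IsCoherent Q) (hE : ExtendsLocal Q Qe) (hU : UpperCutCont Qe)
    {g₁ g₂ : X → EReal} {a : ℝ} (ha : ∀ x, (a:EReal) ≤ g₁ x) (h : ∀ x, g₁ x ≤ g₂ x) :
    Qe g₁ ≤ Qe g₂ := by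
  have T₁ := hU g₁ ⟨a, ha⟩
  have T₂ := hU g₂ ⟨a, fun x => le_trans (ha x) (h x)⟩
  refine le_of_tendsto_of_tendsto T₁ T₂ ?_
  filter_upwards with c
  have hma : ∀ x, ((min a c : ℝ) : EReal) ≤ min (g₁ x) (c:EReal) := fun x =>
    le_min (le_trans (EReal.coe_le_coe_iff.2 (min_le_left a c)) (ha x))
      (EReal.coe_le_coe_iff.2 (min_le_right a c))
  have hmb : ∀ x, min (g₁ x) (c:EReal) ≤ (c:EReal) := fun x => min_le_right _ _
  have hma2 : ∀ x, ((min a c : ℝ) : EReal) ≤ min (g₂ x) (c:EReal) := fun x =>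
    le_trans (hma x) (min_le_min (h x) le_rfl)
  have hmb2 : ∀ x, min (g₂ x) (c:EReal) ≤ (c:EReal) := fun x => min_le_right _ _
  rw [Qe_coe_eq hE hma hmb, Qe_coe_eq hE hma2 hmb2]
  rw [EReal.coe_le_coe_iff]
  apply coh_mono hQ
  intro x
  exact EReal.toReal_le_toReal (min_le_min (h x) le_rfl)
    (ereal_ne_bot (hma x)) (ereal_ne_top (hmb2 x))

lemma Qe_const_le (hQ : IsCoherent Q) (hE : ExtendsLocal Q Qe) (c : ℝ) :
    Qe (fun _ => (c:EReal)) ≤ (c:EReal) := by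
  rw [hE (fun _ => c)]
  exact EReal.coe_le_coe_iff.2 (coh_le_max hQ (fun _ => le_rfl))

lemma Qe_ge_const (hQ : IsCoherent Q) (hE : ExtendsLocal Q Qe) (hU : UpperCutCont Qe)
    {g : X → EReal} {c : ℝ} (hc : ∀ x, (c:EReal) ≤ g x) : (c:EReal) ≤ Qe g := by
  have h1 : Qe (fun _ => (c:EReal)) ≤ Qe g :=
    Qe_mono_bdd hQ hE hU (a := c) (fun _ => le_rfl) hc
  refine le_trans ?_ h1
  rw [hE (fun _ => c)]
  exact EReal.coe_le_coe_iff.2 (coh_ge_min hQ (fun _ => le_rfl))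
end Qe

section VR
variable [Fintype X] [Nonempty X]

noncomputable def VR (Q : List X → (X → ℝ) → ℝ) (f : (ℕ → X) → EReal) (N : ℕ)
    (t : List X) : ℝ :=
  if N ≤ t.length then (f (extPath t)).toReal
  else Q t (fun x => VR Q f N (t ++ [x]))
termination_by N - t.length
decreasing_by simp [List.length_append]; omega

variable {Q : List X → (X → ℝ) → ℝ} {f : (ℕ → X) → EReal} {N : ℕ}

lemma VR_of_ge {t : List X} (h : N ≤ t.length) :
    VR Q f N t = (f (extPath t)).toReal := by rw [VR, if_pos h]

lemma VR_of_lt {t : List X} (h : t.length < N) :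
    VR Q f N t = Q t (fun x => VR Q f N (t ++ [x])) := by rw [VR, if_neg (not_le.2 h)]

lemma VR_bounds (hQ : ∀ s, IsCoherent (Q s)) {a b : ℝ}
    (hab : ∀ ω, (a:EReal) ≤ f ω ∧ f ω ≤ (b:EReal)) :
    ∀ t, a ≤ VR Q f N t ∧ VR Q f N t ≤ b := by
  have key : ∀ k t, N - t.length ≤ k → a ≤ VR Q f N t ∧ VR Q f N t ≤ b := by
    intro k
    induction k with
    | zero =>
      intro t ht
      have hN : N ≤ t.length := by omega
      rw [VR_of_ge hN]
      exact ⟨ereal_toReal_ge (hab _).1 (ereal_ne_top (hab _).2),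
        ereal_toReal_le (hab _).2 (ereal_ne_bot (hab _).1)⟩
    | succ k ih =>
      intro t ht
      by_cases hN : N ≤ t.length
      · rw [VR_of_ge hN]
        exact ⟨ereal_toReal_ge (hab _).1 (ereal_ne_top (hab _).2),
          ereal_toReal_le (hab _).2 (ereal_ne_bot (hab _).1)⟩
      · rw [VR_of_lt (not_le.1 hN)]
        have hch : ∀ x : X, a ≤ VR Q f N (t ++ [x]) ∧ VR Q f N (t ++ [x]) ≤ b := by
          intro x
          apply ih
          simp [List.length_append]
          omega
        exact ⟨coh_ge_min (hQ t) (fun x => (hch x).1), coh_le_max (hQ t) (fun x => (hch x).2)⟩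
  exact fun t => key (N - t.length) t le_rfl
end VR

section EVle
variable [Fintype X] [Nonempty X] {Q : List X → (X → ℝ) → ℝ}
  {Qe : List X → (X → EReal) → EReal} {f : (ℕ → X) → EReal} {N : ℕ}

lemma nthL_append_lt {t : List X} {l : List X} {i : ℕ} (h : i < t.length) :
    nthL (t ++ l) i = nthL t i := by
  rw [nthL, nthL, List.getD_eq_getElem _ _ h,
    List.getD_eq_getElem _ _ (by simp [List.length_append]; omega)]
  exact List.getElem_append_left h

lemma EV_le_VR (hQ : ∀ s, IsCoherent (Q s)) (hQe : LocalExtension Q Qe)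
    (hn : NMeas N f) {a b : ℝ} (hab : ∀ ω, (a:EReal) ≤ f ω ∧ f ω ≤ (b:EReal)) (s : List X) :
    EV Qe f s ≤ ((VR Q f N s : ℝ) : EReal) := by
  apply sInf_le
  refine ⟨fun t => ((VR Q f N t : ℝ) : EReal),
    ⟨a, fun t => EReal.coe_le_coe_iff.2 (VR_bounds hQ hab t).1⟩, ?_, ?_, rfl⟩
  · intro t
    show Qe t (fun x => ((VR Q f N (t ++ [x]) : ℝ) : EReal)) ≤ ((VR Q f N t : ℝ) : EReal)
    by_cases ht : N ≤ t.length
    · have hconst : ∀ x : X, VR Q f N (t ++ [x]) = VR Q f N t := by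
        intro x
        rw [VR_of_ge (by simp [List.length_append]; omega), VR_of_ge ht]
        congr 1
        apply hn
        rw [pref_eq_iff]
        intro i hi
        have hit : i < t.length := lt_of_lt_of_le hi ht
        rw [extPath_lt (by simp [List.length_append]; omega), extPath_lt hit]
        exact nthL_append_lt hit
      have : (fun x : X => ((VR Q f N (t ++ [x]) : ℝ) : EReal)) =
          (fun _ : X => ((VR Q f N t : ℝ) : EReal)) := by
        funext x; rw [hconst x]
      rw [this]
      exact Qe_const_le (hQ t) (hQe t).1 _
    · rw [VR_of_lt (not_le.1 ht)]
      exact le_of_eq ((hQe t).1 (fun x => VR Q f N (t ++ [x])))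
  · intro ω hω
    have hev : ∀ᶠ m in atTop, ((VR Q f N (pref ω m) : ℝ) : EReal) = f ω := by
      filter_upwards [eventually_ge_atTop N] with m hm
      rw [VR_of_ge (by simp [hm])]
      have h1 : f (extPath (pref ω m)) = f ω := by
        apply hn
        have h2 := pref_extPath (pref ω m)
        rw [pref_length] at h2
        exact pref_mono h2 hm
      rw [h1, EReal.coe_toReal (ereal_ne_top (hab ω).2) (ereal_ne_bot (hab ω).1)]
    have : liminf (fun m => ((VR Q f N (pref ω m) : ℝ) : EReal)) atTop
        = liminf (fun _ : ℕ => f ω) atTop := liminf_congr hev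
    rw [this, liminf_const]
end EVle

section EVge
variable [Fintype X] [Nonempty X] {Q : List X → (X → ℝ) → ℝ}
  {Qe : List X → (X → EReal) → EReal} {f : (ℕ → X) → EReal} {N : ℕ}

lemma supermart_step (hQ : ∀ s, IsCoherent (Q s)) (hQe : LocalExtension Q Qe)
    {M : List X → EReal} (hsm : IsSupermart Qe M) (hb : MBddBelow M) (u : List X) :
    ∃ x : X, M (u ++ [x]) ≤ M u := by
  by_cases hM : M u = ⊤
  · exact ⟨Classical.arbitrary X, hM ▸ le_top⟩
  by_contra hc
  push_neg at hc
  obtain ⟨x₀, -, hx₀⟩ := Finset.exists_min_image Finset.univ (fun x : X => M (u ++ [x]))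
    Finset.univ_nonempty
  have h1 : M u < M (u ++ [x₀]) := hc x₀
  obtain ⟨d, hd1, hd2⟩ := exists_between h1
  have hdT : d ≠ ⊤ := by
    intro hdt
    rw [hdt] at hd2
    exact not_top_lt hd2
  have hdB : d ≠ ⊥ := by
    obtain ⟨c, hbc⟩ := hb
    exact (lt_of_lt_of_le (lt_of_lt_of_le (EReal.bot_lt_coe c) (hbc u)) hd1.le).ne'
  set dr := d.toReal with hdrdef
  have hdr : (dr : EReal) = d := EReal.coe_toReal hdT hdB
  have hge : (dr : EReal) ≤ Qe u (fun x => M (u ++ [x])) := by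
    apply Qe_ge_const (hQ u) (hQe u).1 (hQe u).2.1
    intro x
    rw [hdr]
    exact le_trans hd2.le (hx₀ x (Finset.mem_univ x))
  have := le_trans hge (hsm u)
  rw [hdr] at this
  exact absurd this (not_le.2 hd1)

lemma supermart_path (hQ : ∀ s, IsCoherent (Q s)) (hQe : LocalExtension Q Qe)
    {M : List X → EReal} (hsm : IsSupermart Qe M) (hb : MBddBelow M) (t : List X) :
    ∃ ω ∈ cyl t, ∀ m, t.length ≤ m → M (pref ω m) ≤ M t := by
  set pick : List X → X := fun u => Classical.choose (supermart_step hQ hQe hsm hb u) with hpick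
  have hpick_spec : ∀ u, M (u ++ [pick u]) ≤ M u :=
    fun u => Classical.choose_spec (supermart_step hQ hQe hsm hb u)
  set ls : ℕ → List X := fun k => Nat.rec t (fun _ l => l ++ [pick l]) k with hls
  have hsucc : ∀ k, ls (k+1) = ls k ++ [pick (ls k)] := fun k => rfl
  have hlen : ∀ k, (ls k).length = t.length + k := by
    intro k
    induction k with
    | zero => rfl
    | succ k ih => rw [hsucc, List.length_append, ih]; simp; omega
  have hMk : ∀ k, M (ls k) ≤ M t := by
    intro k
    induction k with
    | zero => exact le_rfl
    | succ k ih => exact le_trans (hpick_spec (ls k)) ih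
  have hpre : ∀ k m, k ≤ m → ls k <+: ls m := by
    intro k m hkm
    induction m with
    | zero => rw [Nat.le_zero.1 hkm]
    | succ m ih =>
      rcases Nat.lt_or_ge k (m+1) with h | h
      · exact List.IsPrefix.trans (ih (by omega)) ⟨[pick (ls m)], (hsucc m).symm⟩
      · have : k = m + 1 := by omega
        rw [this]
  set ω : ℕ → X := fun i => nthL (ls (i+1)) i with hω
  have hωi : ∀ k i, i < t.length + k → ω i = nthL (ls k) i := by
    intro k i hik
    have hi1 : i < (ls (i+1)).length := by rw [hlen (i+1)]; omega
    have hik' : i < (ls k).length := by rw [hlen k]; omega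
    show nthL (ls (i+1)) i = nthL (ls k) i
    rw [nthL, nthL, List.getD_eq_getElem _ _ hi1, List.getD_eq_getElem _ _ hik']
    rcases le_or_gt (i+1) k with h | h
    · exact List.IsPrefix.getElem (hpre (i+1) k h) hi1
    · exact (List.IsPrefix.getElem (hpre k (i+1) (by omega)) hik').symm
  have hprefk : ∀ k, pref ω (t.length + k) = ls k := by
    intro k
    apply List.ext_getElem (by rw [pref_length, hlen k])
    intro i h1 h2
    simp only [pref]
    rw [List.getElem_ofFn]
    show ω i = _
    rw [hωi k i (by rwa [hlen k] at h2)]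
    rw [nthL, List.getD_eq_getElem _ _ h2]
  refine ⟨ω, ?_, ?_⟩
  · show pref ω t.length = t
    have := hprefk 0
    rwa [Nat.add_zero] at this
  · intro m hm
    have hmk : m = t.length + (m - t.length) := by omega
    rw [hmk, hprefk]
    exact hMk _

lemma VR_le_supermart_base (hQ : ∀ s, IsCoherent (Q s)) (hQe : LocalExtension Q Qe)
    (hn : NMeas N f) {a b : ℝ} (hab : ∀ ω, (a:EReal) ≤ f ω ∧ f ω ≤ (b:EReal))
    {M : List X → EReal} (hb : MBddBelow M) (hsm : IsSupermart Qe M) {s t : List X}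
    (hM3 : ∀ ω ∈ cyl s, f ω ≤ liminf (fun n => M (pref ω n)) atTop)
    (hst : s <+: t) (hnt : N ≤ t.length) :
    ((VR Q f N t : ℝ) : EReal) ≤ M t := by
  obtain ⟨ω, hω, hωM⟩ := supermart_path hQ hQe hsm hb t
  have h1 : f ω ≤ liminf (fun n => M (pref ω n)) atTop := hM3 ω (cyl_mono hst hω)
  have h2 : liminf (fun n => M (pref ω n)) atTop ≤ M t := by
    have hev : ∀ᶠ m in atTop, M (pref ω m) ≤ (fun _ : ℕ => M t) m := by
      filter_upwards [eventually_ge_atTop t.length] with m hm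
      exact hωM m hm
    have h3 := liminf_le_liminf hev
    rwa [liminf_const] at h3
  have h3 : ((VR Q f N t : ℝ) : EReal) = f ω := by
    rw [VR_of_ge hnt, ← nmeas_cyl_val hn hnt hω]
    exact EReal.coe_toReal (ereal_ne_top (hab ω).2) (ereal_ne_bot (hab ω).1)
  rw [h3]
  exact le_trans h1 h2

lemma VR_le_EV (hQ : ∀ s, IsCoherent (Q s)) (hQe : LocalExtension Q Qe)
    (hn : NMeas N f) {a b : ℝ} (hab : ∀ ω, (a:EReal) ≤ f ω ∧ f ω ≤ (b:EReal)) (s : List X) :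
    ((VR Q f N s : ℝ) : EReal) ≤ EV Qe f s := by
  apply le_sInf
  rintro y ⟨M, hMb, hMs, hMl, rfl⟩
  have main : ∀ k t, s <+: t → N - t.length ≤ k → ((VR Q f N t : ℝ) : EReal) ≤ M t := by
    intro k
    induction k with
    | zero =>
      intro t hst ht
      exact VR_le_supermart_base hQ hQe hn hab hMb hMs hMl hst (by omega)
    | succ k ih =>
      intro t hst ht
      by_cases hN : N ≤ t.length
      · exact VR_le_supermart_base hQ hQe hn hab hMb hMs hMl hst hN
      · rw [VR_of_lt (not_le.1 hN)]
        rw [← (hQe t).1 (fun x => VR Q f N (t ++ [x]))]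
        refine le_trans ?_ (hMs t)
        apply Qe_mono_bdd (hQ t) (hQe t).1 (hQe t).2.1 (a := a)
        · intro x
          exact EReal.coe_le_coe_iff.2 (VR_bounds hQ hab _).1
        · intro x
          apply ih (t ++ [x]) (hst.trans ⟨[x], rfl⟩)
          simp [List.length_append]
          omega
  exact main (N - s.length) s (List.prefix_refl s) le_rfl
end EVge

section MeasSide
variable [Fintype X] [Nonempty X]

lemma cyl_msble (z : List X) : MeasurableSet[cylSA X] (cyl z) :=
  MeasurableSpace.measurableSet_generateFrom ⟨z, rfl⟩

lemma cyl_nil : cyl ([] : List X) = (Set.univ : Set (ℕ → X)) := by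
  ext ω
  simp only [cyl, Set.mem_setOf_eq, Set.mem_univ, iff_true, List.length_nil]
  rfl

lemma fmeas_of_nmeas {f : (ℕ → X) → EReal} {n : ℕ} (hn : NMeas n f) : FMeasurable f := by
  letI : MeasurableSpace (ℕ → X) := cylSA X
  have hpref : @Measurable (ℕ → X) (List X) (cylSA X) ⊤ (fun ω => pref ω n) := by
    letI : MeasurableSpace (List X) := ⊤
    apply measurable_to_countable
    intro ω
    have h1 : (fun ω' : ℕ → X => pref ω' n) ⁻¹' {pref ω n} = cyl (pref ω n) := by
      ext ω'
      simp only [Set.mem_preimage, Set.mem_singleton_iff, cyl, Set.mem_setOf_eq, pref_length]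
    rw [h1]
    exact cyl_msble _
  have hfact : f = (fun z : List X => f (extPath z)) ∘ (fun ω => pref ω n) := by
    funext ω
    show f ω = f (extPath (pref ω n))
    apply hn
    have h2 := pref_extPath (pref ω n)
    rw [pref_length] at h2
    exact h2.symm
  rw [FMeasurable, hfact]
  exact (@measurable_from_top (List X) EReal _ _).comp hpref

lemma toENN_mono {x y : EReal} (h : x ≤ y) : toENN x ≤ toENN y := by
  rw [toENN, toENN]
  by_cases hy : y = ⊤
  · rw [if_pos hy]; exact le_top
  have hx : x ≠ ⊤ := fun hc => hy (top_le_iff.1 (hc ▸ h))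
  rw [if_neg hx, if_neg hy]
  by_cases hxb : x = ⊥
  · simp [hxb]
  exact ENNReal.ofReal_le_ofReal (EReal.toReal_le_toReal h hxb hy)

lemma emeas_mono {P : @Measure (ℕ → X) (cylSA X)} {g₁ g₂ : (ℕ → X) → EReal}
    (h : ∀ ω, g₁ ω ≤ g₂ ω) : emeas P g₁ ≤ emeas P g₂ := by
  have hpos : lpos P g₁ ≤ lpos P g₂ :=
    lintegral_mono (fun ω => toENN_mono (h ω))
  have hneg : lneg P g₂ ≤ lneg P g₁ :=
    lintegral_mono (fun ω => toENN_mono (EReal.neg_le_neg_iff.2 (h ω)))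
  exact EReal.sub_le_sub (EReal.coe_ennreal_le_coe_ennreal_iff.2 hpos)
    (EReal.coe_ennreal_le_coe_ennreal_iff.2 hneg)

lemma upInt1_eq_emeas {P : @Measure (ℕ → X) (cylSA X)} {f : (ℕ → X) → EReal} {n : ℕ}
    (hn : NMeas n f) {a b : ℝ} (hab : ∀ ω, (a:EReal) ≤ f ω ∧ f ω ≤ (b:EReal)) :
    upInt1 P f = emeas P f := by
  apply le_antisymm
  · exact sInf_le ⟨f, fmeas_of_nmeas hn, ⟨a, fun ω => (hab ω).1⟩, fun ω => le_rfl, rfl⟩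
  · apply le_sInf
    rintro y ⟨g, hgm, hgb, hgle, rfl⟩
    exact emeas_mono hgle

variable {p : List X → X → ℝ} {P : List X → @Measure (ℕ → X) (cylSA X)}

lemma cylP_self (hcp : CylProp p P) (s : List X) : P s (cyl s) = 1 := by
  rw [hcp s s, if_neg (by simp), if_pos (by simp)]

lemma cylP_univ (hcp : CylProp p P) (s : List X) : P s Set.univ = 1 := by
  rw [← cyl_nil, hcp s [], if_neg (by simp), if_pos (by simp)]

lemma cylP_compl (hcp : CylProp p P) (s : List X) : P s ((cyl s)ᶜ) = 0 := by
  have h1 := @measure_compl (ℕ → X) (cylSA X) (P s) (cyl s) (cyl_msble s)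
    (by rw [cylP_self hcp]; exact ENNReal.one_ne_top)
  rw [h1, cylP_univ hcp, cylP_self hcp, tsub_self]

/-- key lintegral computation for `N`-measurable `ℝ≥0∞`-valued maps -/
lemma lint_cylinder {g : (ℕ → X) → ℝ≥0∞}
    (hg : ∀ ω₁ ω₂ : ℕ → X, pref ω₁ N = pref ω₂ N → g ω₁ = g ω₂)
    {s : List X} (hsN : s.length ≤ N) (hcp : CylProp p P) :
    @MeasureTheory.lintegral _ (cylSA X) (P s) g =
      ∑ u : Fin (N - s.length) → X,
        g (extPath (s ++ List.ofFn u)) * P s (cyl (s ++ List.ofFn u)) := by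
  letI : MeasurableSpace (ℕ → X) := cylSA X
  set k := N - s.length with hk
  have hlen : ∀ u : Fin k → X, (s ++ List.ofFn u).length = N := by
    intro u; simp [List.length_append]; omega
  -- pointwise decomposition
  have hpt : ∀ ω, g ω =
      (∑ u : Fin k → X, (cyl (s ++ List.ofFn u)).indicator
        (fun _ => g (extPath (s ++ List.ofFn u))) ω)
      + ((cyl s)ᶜ).indicator g ω := by
    intro ω
    by_cases hω : ω ∈ cyl s
    · have hind2 : ((cyl s)ᶜ).indicator g ω = 0 := by
        rw [Set.indicator_of_notMem (by simpa using hω)]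
      set u₀ : Fin k → X := fun i => ω (s.length + i) with hu₀
      have hmem : ∀ u : Fin k → X, ω ∈ cyl (s ++ List.ofFn u) ↔ u = u₀ := by
        intro u
        rw [mem_cyl_iff]
        constructor
        · intro h
          funext j
          have hj : (s.length + (j:ℕ)) < (s ++ List.ofFn u).length := by
            rw [List.length_append, List.length_ofFn]; omega
          have := h (s.length + j) hj
          rw [nthL, List.getD_eq_getElem _ _ hj,
            List.getElem_append_right (by omega)] at this
          simp only [List.getElem_ofFn] at this
          simp only [add_tsub_cancel_left] at this
          simp only [hu₀]
          rw [this]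
        · rintro rfl
          intro i hi
          rw [List.length_append, List.length_ofFn] at hi
          rcases lt_or_ge i s.length with h1 | h1
          · rw [nthL, List.getD_eq_getElem _ _ (by rw [List.length_append]; omega),
              List.getElem_append_left h1]
            have := mem_cyl_iff.1 hω i h1
            rw [this, nthL, List.getD_eq_getElem _ _ h1]
          · rw [nthL, List.getD_eq_getElem _ _ (by rw [List.length_append, List.length_ofFn]; omega),
              List.getElem_append_right h1]
            simp only [List.getElem_ofFn]
            rw [hu₀]
            simp only []
            congr 1
            omega
      have hsum : (∑ u : Fin k → X, (cyl (s ++ List.ofFn u)).indicator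
          (fun _ => g (extPath (s ++ List.ofFn u))) ω) = g (extPath (s ++ List.ofFn u₀)) := by
        have h1 : ∀ u : Fin k → X, (cyl (s ++ List.ofFn u)).indicator
            (fun _ => g (extPath (s ++ List.ofFn u))) ω
            = if u = u₀ then g (extPath (s ++ List.ofFn u)) else 0 := by
          intro u
          rw [Set.indicator_apply]
          congr 1
          simp [hmem u]
        rw [Finset.sum_congr rfl (fun u _ => h1 u), Finset.sum_ite_eq' Finset.univ u₀]
        simp
      rw [hsum, hind2, add_zero]
      apply hg
      have hωmem : ω ∈ cyl (s ++ List.ofFn u₀) := (hmem u₀).2 rfl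
      have h2 := pref_extPath_eq hωmem (n := N) (by rw [hlen u₀])
      exact h2.symm
    · have h1 : ∀ u : Fin k → X, (cyl (s ++ List.ofFn u)).indicator
          (fun _ => g (extPath (s ++ List.ofFn u))) ω = 0 := by
        intro u
        apply Set.indicator_of_notMem
        intro hmem
        exact hω (cyl_mono ⟨List.ofFn u, rfl⟩ hmem)
      rw [Finset.sum_congr rfl (fun u _ => h1 u)]
      rw [Set.indicator_of_mem ((Set.mem_compl_iff _ _).2 hω)]
      simp
  -- integrate
  have hmeas1 : Measurable (fun ω => ∑ u : Fin k → X, (cyl (s ++ List.ofFn u)).indicator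
      (fun _ => g (extPath (s ++ List.ofFn u))) ω) := by
    apply Finset.measurable_sum
    intro u _
    exact Measurable.indicator measurable_const (cyl_msble _)
  calc ∫⁻ ω, g ω ∂(P s)
      = ∫⁻ ω, ((∑ u : Fin k → X, (cyl (s ++ List.ofFn u)).indicator
          (fun _ => g (extPath (s ++ List.ofFn u))) ω)
        + ((cyl s)ᶜ).indicator g ω) ∂(P s) := lintegral_congr hpt
    _ = (∫⁻ ω, (∑ u : Fin k → X, (cyl (s ++ List.ofFn u)).indicator
          (fun _ => g (extPath (s ++ List.ofFn u))) ω) ∂(P s))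
        + ∫⁻ ω, ((cyl s)ᶜ).indicator g ω ∂(P s) := lintegral_add_left hmeas1 _
    _ = ∑ u : Fin k → X, g (extPath (s ++ List.ofFn u)) * P s (cyl (s ++ List.ofFn u)) := by
        have h2 : ∫⁻ ω, ((cyl s)ᶜ).indicator g ω ∂(P s) = 0 := by
          rw [lintegral_indicator (MeasurableSet.compl (cyl_msble s))]
          exact setLIntegral_measure_zero _ _ (cylP_compl hcp s)
        rw [h2, add_zero, lintegral_finset_sum _ (fun u _ =>
          Measurable.indicator measurable_const (cyl_msble _))]
        apply Finset.sum_congr rfl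
        intro u _
        rw [lintegral_indicator (cyl_msble _), setLIntegral_const]
end MeasSide


section TP
variable [Fintype X] [Nonempty X]

/-- the expectation of `f` at horizon `k` under the precise tree `p`, from situation `t`. -/
noncomputable def TP (p : List X → X → ℝ) (f : (ℕ → X) → EReal) (t : List X) (k : ℕ) : ℝ :=
  ∑ u : Fin k → X, (f (extPath (t ++ List.ofFn u))).toReal *
    ∏ i ∈ Finset.range k,
      p ((t ++ List.ofFn u).take (t.length + i)) (nthL (t ++ List.ofFn u) (t.length + i))

variable {p : List X → X → ℝ} {f : (ℕ → X) → EReal}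

lemma TP_zero (t : List X) : TP p f t 0 = (f (extPath t)).toReal := by
  rw [TP, Fintype.sum_unique]
  have h1 : ∀ u : Fin 0 → X, t ++ List.ofFn u = t := by
    intro u; simp [List.ofFn_zero]
  simp [h1]

lemma TP_succ (t : List X) (k : ℕ) :
    TP p f t (k+1) = ∑ x : X, p t x * TP p f (t ++ [x]) k := by
  rw [TP]
  refine Fintype.sum_equiv (Fin.consEquiv fun _ : Fin (k+1) => X).symm
    _ (fun xu : X × (Fin k → X) => p t xu.1 *
      ((f (extPath ((t ++ [xu.1]) ++ List.ofFn xu.2))).toReal *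
        ∏ i ∈ Finset.range k,
          p (((t ++ [xu.1]) ++ List.ofFn xu.2).take ((t ++ [xu.1]).length + i))
            (nthL ((t ++ [xu.1]) ++ List.ofFn xu.2) ((t ++ [xu.1]).length + i))))
    ?_ |>.trans ?_
  · intro u
    have he : (Fin.consEquiv fun _ : Fin (k+1) => X).symm u = (u 0, fun i : Fin k => u i.succ) := rfl
    rw [he]
    set x := u 0 with hx
    set v : Fin k → X := fun i => u i.succ with hv
    have hz : t ++ List.ofFn u = (t ++ [x]) ++ List.ofFn v := by
      rw [List.ofFn_succ, List.append_cons]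
    have hlen1 : (t ++ [x]).length = t.length + 1 := by simp
    rw [hz, Finset.prod_range_succ']
    have hterm0 : p (((t ++ [x]) ++ List.ofFn v).take (t.length + 0))
        (nthL ((t ++ [x]) ++ List.ofFn v) (t.length + 0)) = p t x := by
      congr 1
      · rw [Nat.add_zero, List.append_assoc]
        exact List.take_left (l₁ := t) (l₂ := [x] ++ List.ofFn v)
      · have hb : t.length < ((t ++ [x]) ++ List.ofFn v).length := by
          simp [List.length_append]
        rw [Nat.add_zero, nthL, List.getD_eq_getElem _ _ hb]
        rw [List.getElem_append_left (show t.length < (t ++ [x]).length by simp)]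
        exact List.getElem_concat_length (l := t) (a := x) (i := t.length) rfl (by simp)
    have hprod : ∀ i ∈ Finset.range k,
        p (((t ++ [x]) ++ List.ofFn v).take (t.length + (i + 1)))
          (nthL ((t ++ [x]) ++ List.ofFn v) (t.length + (i + 1)))
        = p (((t ++ [x]) ++ List.ofFn v).take ((t ++ [x]).length + i))
          (nthL ((t ++ [x]) ++ List.ofFn v) ((t ++ [x]).length + i)) := by
      intro i _
      rw [hlen1]
      congr 2 <;> omega
    rw [Finset.prod_congr rfl hprod, hterm0]
    ring
  · rw [Fintype.sum_prod_type]
    apply Finset.sum_congr rfl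
    intro x _
    rw [TP, Finset.mul_sum]
end TP


section EmeasEq
variable [Fintype X] [Nonempty X] {p : List X → X → ℝ}
  {P : List X → @Measure (ℕ → X) (cylSA X)} {f : (ℕ → X) → EReal} {N : ℕ}

lemma enn_coe_eq {x : ℝ≥0∞} (hx : x ≠ ⊤) : (x : EReal) = ((x.toReal : ℝ) : EReal) := by
  have h1 : ((x : EReal)).toReal = x.toReal := EReal.toReal_coe_ennreal
  rw [← h1]
  refine (EReal.coe_toReal ?_ ?_).symm
  · exact fun hc => hx (EReal.coe_ennreal_eq_top_iff.1 hc)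
  · exact ereal_ne_bot (a := 0) (by simpa using EReal.coe_ennreal_nonneg x)

lemma w_toReal (hcp : CylProp p P) (hnn : ∀ t x, 0 ≤ p t x) (s : List X) {k : ℕ}
    (u : Fin k → X) :
    (P s (cyl (s ++ List.ofFn u))).toReal
      = ∏ i ∈ Finset.range k,
          p ((s ++ List.ofFn u).take (s.length + i)) (nthL (s ++ List.ofFn u) (s.length + i)) := by
  rcases Nat.eq_zero_or_pos k with hk | hk
  · subst hk
    have h0 : s ++ List.ofFn u = s := by simp [List.ofFn_zero]
    rw [h0, cylP_self hcp]
    simp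
  · rw [hcp s (s ++ List.ofFn u), if_pos ⟨by simp [List.length_append]; omega,
      List.take_left (l₁ := s) (l₂ := List.ofFn u)⟩]
    rw [ENNReal.toReal_prod]
    have hL : (s ++ List.ofFn u).length = s.length + k := by simp [List.length_append]
    rw [hL, Finset.prod_Ico_eq_prod_range]
    simp only [add_tsub_cancel_left]
    apply Finset.prod_congr rfl
    intro i _
    exact ENNReal.toReal_ofReal (hnn _ _)

lemma emeas_eq (hcp : CylProp p P) (hnn : ∀ t x, 0 ≤ p t x) (hn : NMeas N f)
    {a b : ℝ} (hab : ∀ ω, (a:EReal) ≤ f ω ∧ f ω ≤ (b:EReal)) {s : List X}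
    (hsN : s.length ≤ N) :
    emeas (P s) f = ((TP p f s (N - s.length) : ℝ) : EReal) := by
  set k := N - s.length with hk
  set F : (Fin k → X) → ℝ := fun u => (f (extPath (s ++ List.ofFn u))).toReal with hF
  set w : (Fin k → X) → ℝ≥0∞ := fun u => P s (cyl (s ++ List.ofFn u)) with hw
  have hwne : ∀ u, w u ≠ ⊤ := by
    intro u
    have h1 : w u ≤ P s Set.univ := measure_mono (Set.subset_univ _)
    rw [cylP_univ hcp] at h1
    exact (lt_of_le_of_lt h1 ENNReal.one_lt_top).ne
  have hfT : ∀ ω, f ω ≠ ⊤ := fun ω => ereal_ne_top (hab ω).2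
  have hfB : ∀ ω, f ω ≠ ⊥ := fun ω => ereal_ne_bot (hab ω).1
  -- lpos
  have hgpos : ∀ ω₁ ω₂ : ℕ → X, pref ω₁ N = pref ω₂ N → toENN (f ω₁) = toENN (f ω₂) :=
    fun ω₁ ω₂ h => by rw [hn ω₁ ω₂ h]
  have hpos : lpos (P s) f = ∑ u : Fin k → X, ENNReal.ofReal (F u) * w u := by
    rw [lpos, lint_cylinder hgpos hsN hcp]
    apply Finset.sum_congr rfl
    intro u _
    rw [toENN, if_neg (hfT _)]
  have hgneg : ∀ ω₁ ω₂ : ℕ → X, pref ω₁ N = pref ω₂ N →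
      toENN (-(f ω₁)) = toENN (-(f ω₂)) := fun ω₁ ω₂ h => by rw [hn ω₁ ω₂ h]
  have hneg : lneg (P s) f = ∑ u : Fin k → X, ENNReal.ofReal (-(F u)) * w u := by
    rw [lneg, lint_cylinder hgneg hsN hcp]
    apply Finset.sum_congr rfl
    intro u _
    have hne : -(f (extPath (s ++ List.ofFn u))) ≠ ⊤ := by
      simp only [ne_eq, EReal.neg_eq_top_iff]
      exact hfB _
    rw [toENN, if_neg hne, EReal.toReal_neg_eq]
  have hposne : lpos (P s) f ≠ ⊤ := by
    rw [hpos]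
    exact (ENNReal.sum_lt_top.2 (fun u _ =>
      ENNReal.mul_lt_top ENNReal.ofReal_lt_top (lt_top_iff_ne_top.2 (hwne u)))).ne
  have hnegne : lneg (P s) f ≠ ⊤ := by
    rw [hneg]
    exact (ENNReal.sum_lt_top.2 (fun u _ =>
      ENNReal.mul_lt_top ENNReal.ofReal_lt_top (lt_top_iff_ne_top.2 (hwne u)))).ne
  rw [emeas, enn_coe_eq hposne, enn_coe_eq hnegne, ← EReal.coe_sub]
  rw [EReal.coe_eq_coe_iff]
  have hptr : (lpos (P s) f).toReal = ∑ u : Fin k → X, (F u ⊔ 0) * (w u).toReal := by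
    rw [hpos, ENNReal.toReal_sum (fun u _ =>
      ENNReal.mul_ne_top ENNReal.ofReal_ne_top (hwne u))]
    apply Finset.sum_congr rfl
    intro u _
    rw [ENNReal.toReal_mul, ENNReal.toReal_ofReal']
  have hntr : (lneg (P s) f).toReal = ∑ u : Fin k → X, ((-(F u)) ⊔ 0) * (w u).toReal := by
    rw [hneg, ENNReal.toReal_sum (fun u _ =>
      ENNReal.mul_ne_top ENNReal.ofReal_ne_top (hwne u))]
    apply Finset.sum_congr rfl
    intro u _
    rw [ENNReal.toReal_mul, ENNReal.toReal_ofReal']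
  rw [hptr, hntr, ← Finset.sum_sub_distrib]
  rw [TP]
  apply Finset.sum_congr rfl
  intro u _
  rw [← w_toReal hcp hnn s u]
  have hww : (P s (cyl (s ++ List.ofFn u))).toReal = (w u).toReal := rfl
  rw [hww]
  have : (F u ⊔ 0) * (w u).toReal - (-(F u) ⊔ 0) * (w u).toReal
      = (F u ⊔ 0 - (-(F u) ⊔ 0)) * (w u).toReal := by ring
  rw [this, max_zero_sub_max_neg_zero_eq_self]

end EmeasEq

section TPVR
variable [Fintype X] [Nonempty X] {Q : List X → (X → ℝ) → ℝ} {p : List X → X → ℝ}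
  {f : (ℕ → X) → EReal} {N : ℕ}

lemma TP_le_VR (hcompat : Compat Q p) :
    ∀ k t, t.length + k = N → TP p f t k ≤ VR Q f N t := by
  intro k
  induction k with
  | zero =>
    intro t ht
    rw [TP_zero, VR_of_ge (by omega)]
  | succ k ih =>
    intro t ht
    rw [TP_succ, VR_of_lt (by omega)]
    have h1 : ∑ x : X, p t x * TP p f (t ++ [x]) k
        ≤ ∑ x : X, p t x * VR Q f N (t ++ [x]) := by
      apply Finset.sum_le_sum
      intro x _
      exact mul_le_mul_of_nonneg_left (ih (t ++ [x]) (by simp; omega)) ((hcompat t).1 x)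
    refine le_trans h1 ?_
    have h2 := (hcompat t).2.2 (fun x => VR Q f N (t ++ [x]))
    calc ∑ x : X, p t x * VR Q f N (t ++ [x])
        = ∑ x : X, VR Q f N (t ++ [x]) * p t x := by
          apply Finset.sum_congr rfl; intro x _; ring
      _ ≤ Q t (fun x => VR Q f N (t ++ [x])) := h2

noncomputable def pstar (hQ : ∀ s : List X, IsCoherent (Q s)) (f : (ℕ → X) → EReal)
    (N : ℕ) : List X → X → ℝ :=
  fun t => Classical.choose (credal_attains' (hQ t) (fun x => VR Q f N (t ++ [x])))

lemma pstar_compat (hQ : ∀ s : List X, IsCoherent (Q s)) :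
    Compat Q (pstar hQ f N) := fun t =>
  (Classical.choose_spec (credal_attains' (hQ t) (fun x => VR Q f N (t ++ [x])))).1

lemma pstar_eq (hQ : ∀ s : List X, IsCoherent (Q s)) (t : List X) :
    ∑ x : X, VR Q f N (t ++ [x]) * pstar hQ f N t x
      = Q t (fun x => VR Q f N (t ++ [x])) :=
  (Classical.choose_spec (credal_attains' (hQ t) (fun x => VR Q f N (t ++ [x])))).2

lemma TP_pstar_eq (hQ : ∀ s : List X, IsCoherent (Q s)) :
    ∀ k t, t.length + k = N → TP (pstar hQ f N) f t k = VR Q f N t := by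
  intro k
  induction k with
  | zero =>
    intro t ht
    rw [TP_zero, VR_of_ge (by omega)]
  | succ k ih =>
    intro t ht
    rw [TP_succ, VR_of_lt (by omega)]
    rw [← pstar_eq hQ t]
    apply Finset.sum_congr rfl
    intro x _
    rw [ih (t ++ [x]) (by simp; omega)]
    ring
end TPVR

section Assemble
variable [Fintype X] [Nonempty X] {Q : List X → (X → ℝ) → ℝ}
  {P : (List X → X → ℝ) → List X → @Measure (ℕ → X) (cylSA X)}
  {f : (ℕ → X) → EReal} {N : ℕ}

lemma Emeas_eq_VR (hQ : ∀ s : List X, IsCoherent (Q s))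
    (hP : ∀ p : List X → X → ℝ, Compat Q p → CylProp p (P p))
    (hn : NMeas N f) {a b : ℝ} (hab : ∀ ω, (a:EReal) ≤ f ω ∧ f ω ≤ (b:EReal))
    {s : List X} (hsN : s.length ≤ N) :
    Emeas Q P f s = ((VR Q f N s : ℝ) : EReal) := by
  apply le_antisymm
  · apply sSup_le
    rintro y ⟨q, hcq, rfl⟩
    rw [upInt1_eq_emeas hn hab,
      emeas_eq (hP q hcq) (fun t x => (hcq t).1 x) hn hab hsN]
    exact EReal.coe_le_coe_iff.2 (TP_le_VR hcq (N - s.length) s (by omega))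
  · apply le_sSup
    refine ⟨pstar hQ f N, pstar_compat hQ, ?_⟩
    rw [upInt1_eq_emeas hn hab,
      emeas_eq (hP _ (pstar_compat hQ)) (fun t x => ((pstar_compat hQ) t).1 x) hn hab hsN,
      TP_pstar_eq hQ (N - s.length) s (by omega)]
end Assemble


theorem stmt19 {X : Type*} [Fintype X] [Nonempty X]
    (Q : List X → (X → ℝ) → ℝ) (hQ : ∀ s, IsCoherent (Q s))
    (Qe : List X → (X → EReal) → EReal) (hQe : LocalExtension Q Qe)
    (P : (List X → X → ℝ) → List X → @Measure (ℕ → X) (cylSA X))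
    (hP : ∀ p : List X → X → ℝ, Compat Q p → CylProp p (P p))
    (f : (ℕ → X) → EReal) (hf : IsFinitaryGamble f) (s : List X) :
    Emeas Q P f s = EV Qe f s := by
  obtain ⟨⟨n, hn⟩, a, b, hab⟩ := hf
  have hn' : NMeas (max n s.length) f := nmeas_mono hn (le_max_left _ _)
  have hsN : s.length ≤ max n s.length := le_max_right _ _
  rw [Emeas_eq_VR hQ hP hn' hab hsN]
  exact le_antisymm (VR_le_EV hQ hQe hn' hab s) (EV_le_VR hQ hQe hn' hab s)

end UEP
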